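/- arXiv:math/0211343 — 5 statements merged into one kernel-verified Lean document; each statement's English description precedes it below -/
import Mathlib

section
/- Let n ≥ 2 be an integer and let φ : ℝⁿ → ℂ be a C² function with compact support. Then for every x ∈ ℝⁿ the function y ↦ Σ_{i=1}^n ((xᵢ − yᵢ)/‖x − y‖ⁿ) ∂ᵢφ(y) is Lebesgue integrable on ℝⁿ and φ(x) = (Γ(n/2)/(2 π^{n/2})) · ∫_{ℝⁿ} Σ_{i=1}^n ((xᵢ − yᵢ)/‖x − y‖ⁿ) ∂ᵢφ(y) dy. -/
open MeasureTheory Metric Set Filter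
open scoped NNReal ENNReal

private lemma euclid_sum_single {n : ℕ} (v : EuclideanSpace ℝ (Fin n)) :
    ∑ i, v i • EuclideanSpace.single i (1:ℝ) = v := by
  simpa [EuclideanSpace.basisFun_apply, EuclideanSpace.basisFun_repr] using
    (EuclideanSpace.basisFun (Fin n) ℝ).sum_repr v

private lemma integrable_subtype_comap' {α : Type*} [MeasurableSpace α] {μ : Measure α}
    {s : Set α} (hs : MeasurableSet s) (f : α → ℂ) :
    Integrable (fun x : s => f x) (μ.comap Subtype.val) ↔ IntegrableOn f s μ := by
  rw [IntegrableOn, ← map_comap_subtype_coe hs,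
    (MeasurableEmbedding.subtype_coe hs).integrable_map_iff]
  rfl

/-- Polar-coordinates computation: the integral of `(‖z‖^d)⁻¹ • Dφ(x-z)(z)` equals
`toSphere univ • φ x`. -/
private lemma stmt2_polar {E : Type*} [NormedAddCommGroup E] [NormedSpace ℝ E]
    [MeasurableSpace E] [BorelSpace E] [FiniteDimensional ℝ E] [Nontrivial E]
    (μ : Measure E) [μ.IsAddHaarMeasure]
    (φ : E → ℂ) (hφ : ContDiff ℝ 2 φ) (hsupp : HasCompactSupport φ) (x : E) :
    Integrable (fun z : E => (‖z‖ ^ (Module.finrank ℝ E))⁻¹ • (fderiv ℝ φ (x - z) z)) μ ∧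
      ∫ z : E, (‖z‖ ^ (Module.finrank ℝ E))⁻¹ • (fderiv ℝ φ (x - z) z) ∂μ =
        (μ.toSphere (univ : Set (sphere (0:E) 1))).toReal • φ x := by
  classical
  set d := Module.finrank ℝ E with hd
  have hd1 : 1 ≤ d := Module.finrank_pos
  have hDc : Continuous (fderiv ℝ φ) := hφ.continuous_fderiv two_ne_zero
  have hDsupp : HasCompactSupport (fderiv ℝ φ) := hsupp.fderiv (𝕜 := ℝ)
  obtain ⟨M, hM⟩ := hDc.bounded_above_of_compact_support hDsupp
  have hM0 : 0 ≤ M := le_trans (norm_nonneg _) (hM 0)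
  obtain ⟨K₁, hK₁⟩ := hsupp.isBounded.subset_closedBall 0
  set K := |K₁| with hKdef
  have hK0 : 0 ≤ K := abs_nonneg _
  have hK : tsupport φ ⊆ closedBall 0 K :=
    hK₁.trans (closedBall_subset_closedBall (le_abs_self K₁))
  set R := ‖x‖ + K + 1 with hRdef
  have hR0 : 0 < R := by positivity
  have hφzero : ∀ z : E, K < ‖z‖ → φ z = 0 := by
    intro z hz
    apply image_eq_zero_of_notMem_tsupport
    intro h
    have := hK h
    rw [mem_closedBall, dist_zero_right] at this
    linarith
  have hDzero : ∀ z : E, K < ‖z‖ → fderiv ℝ φ z = 0 := by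
    intro z hz
    by_contra h
    have hmem : z ∈ tsupport φ := support_fderiv_subset ℝ (by simpa [Function.mem_support] using h)
    have := hK hmem
    rw [mem_closedBall, dist_zero_right] at this
    linarith
  have hω1 : ∀ ω : sphere (0:E) 1, ‖(ω:E)‖ = 1 := fun ω => mem_sphere_zero_iff_norm.mp ω.2
  have hnormbig : ∀ (ω : sphere (0:E) 1) (r : ℝ), ‖x‖ + K < |r| → K < ‖x - r • (ω:E)‖ := by
    intro ω r hr
    have h1 : ‖r • (ω:E)‖ = |r| := by rw [norm_smul, hω1, Real.norm_eq_abs, mul_one]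
    have h2 : ‖r • (ω:E)‖ - ‖x‖ ≤ ‖x - r • (ω:E)‖ := by
      calc ‖r • (ω:E)‖ - ‖x‖ ≤ ‖r • (ω:E) - x‖ := norm_sub_norm_le _ _
        _ = ‖x - r • (ω:E)‖ := norm_sub_rev _ _
    linarith [h1 ▸ h2]
  -- the radial slice functions
  have hFcont : ∀ ω : sphere (0:E) 1,
      Continuous (fun r : ℝ => fderiv ℝ φ (x - r • (ω:E)) (ω:E)) := by
    intro ω
    exact (hDc.comp (by fun_prop)).clm_apply continuous_const
  have hFsupp : ∀ ω : sphere (0:E) 1,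
      HasCompactSupport (fun r : ℝ => fderiv ℝ φ (x - r • (ω:E)) (ω:E)) := by
    intro ω
    apply HasCompactSupport.intro (isCompact_Icc (a := -R) (b := R))
    intro r hr
    have hrR : ‖x‖ + K < |r| := by
      simp only [mem_Icc, not_and_or, not_le] at hr
      rcases hr with h | h
      · rw [lt_abs]; right; linarith
      · rw [lt_abs]; left; linarith
    rw [hDzero _ (hnormbig ω r hrR)]
    simp
  have hFint : ∀ ω : sphere (0:E) 1,
      IntegrableOn (fun r : ℝ => fderiv ℝ φ (x - r • (ω:E)) (ω:E)) (Ioi 0) := fun ω =>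
    ((hFcont ω).integrable_of_hasCompactSupport (hFsupp ω)).integrableOn
  have hFval : ∀ ω : sphere (0:E) 1,
      ∫ r in Ioi (0:ℝ), fderiv ℝ φ (x - r • (ω:E)) (ω:E) = φ x := by
    intro ω
    set ψ : ℝ → ℂ := fun r => φ (x - r • (ω:E)) with hψ
    have hψc : ContDiff ℝ 1 ψ :=
      (hφ.of_le one_le_two).comp (contDiff_const.sub (contDiff_id.smul contDiff_const))
    have hψs : HasCompactSupport ψ := by
      apply HasCompactSupport.intro (isCompact_Icc (a := -R) (b := R))
      intro r hr
      have hrR : ‖x‖ + K < |r| := by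
        simp only [mem_Icc, not_and_or, not_le] at hr
        rcases hr with h | h
        · rw [lt_abs]; right; linarith
        · rw [lt_abs]; left; linarith
      exact hφzero _ (hnormbig ω r hrR)
    have hψd : ∀ r : ℝ, HasDerivAt ψ (-(fderiv ℝ φ (x - r • (ω:E)) (ω:E))) r := by
      intro r
      have hL : HasDerivAt (fun r : ℝ => x - r • (ω:E)) (-(ω:E)) r := by
        simpa using ((hasDerivAt_id r).smul_const (ω:E)).const_sub x
      have h1 := (hφ.differentiable two_ne_zero (x - r • (ω:E))).hasFDerivAt
      have h2 := h1.comp_hasDerivAt r hL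
      simp at h2
      exact h2
    have hder : deriv ψ = fun r => -(fderiv ℝ φ (x - r • (ω:E)) (ω:E)) :=
      funext fun r => (hψd r).deriv
    have h0 := hψs.integral_Ioi_deriv_eq hψc 0
    rw [hder] at h0
    rw [integral_neg] at h0
    have : ψ 0 = φ x := by simp [hψ]
    rw [this] at h0
    exact neg_injective h0
  -- slice integrability / values w.r.t. `volumeIoiPow (d-1)`
  set G : sphere (0:E) 1 × Ioi (0:ℝ) → ℂ :=
    fun p => fderiv ℝ φ (x - (p.2 : ℝ) • (p.1 : E)) (p.1 : E) with hGdef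
  set H : sphere (0:E) 1 × Ioi (0:ℝ) → ℂ :=
    fun p => (((p.2 : ℝ)) ^ (d-1))⁻¹ • G p with hHdef
  have hmeasd : Measurable fun r : Ioi (0:ℝ) => ((r : ℝ) ^ (d-1)).toNNReal :=
    (measurable_subtype_coe.pow_const _).real_toNNReal
  have hsmul : ∀ (ω : sphere (0:E) 1) (r : Ioi (0:ℝ)),
      (((r : ℝ) ^ (d-1)).toNNReal : ℝ≥0) • H (ω, r) = G (ω, r) := by
    intro ω r
    have hr0 : (0:ℝ) < r := r.2
    rw [NNReal.smul_def, Real.coe_toNNReal _ (pow_nonneg hr0.le _), hHdef]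
    simp only [smul_smul]
    rw [mul_inv_cancel₀ (pow_ne_zero _ hr0.ne'), one_smul]
  have hGint : ∀ ω : sphere (0:E) 1,
      Integrable (fun r : Ioi (0:ℝ) => G (ω, r)) (Measure.comap Subtype.val volume) := by
    intro ω
    exact (integrable_subtype_comap' measurableSet_Ioi _).2 (hFint ω)
  have hslice : ∀ ω : sphere (0:E) 1,
      Integrable (fun r : Ioi (0:ℝ) => H (ω, r)) (Measure.volumeIoiPow (d-1)) := by
    intro ω
    rw [Measure.volumeIoiPow]
    simp only [ENNReal.ofReal]
    rw [integrable_withDensity_iff_integrable_smul hmeasd]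
    exact (hGint ω).congr (ae_of_all _ fun r => (hsmul ω r).symm)
  have hsliceval : ∀ ω : sphere (0:E) 1,
      ∫ r : Ioi (0:ℝ), H (ω, r) ∂(Measure.volumeIoiPow (d-1)) = φ x := by
    intro ω
    rw [Measure.volumeIoiPow]
    simp only [ENNReal.ofReal]
    rw [integral_withDensity_eq_integral_smul hmeasd]
    refine Eq.trans (integral_congr_ae (ae_of_all _ fun r => ?_)) <|
      (integral_subtype_comap measurableSet_Ioi
        (fun t : ℝ => fderiv ℝ φ (x - t • (ω:E)) (ω:E))).trans (hFval ω)
    exact hsmul ω r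
  -- norm computation for slices
  have hslicenorm : ∀ ω : sphere (0:E) 1,
      ∫ r : Ioi (0:ℝ), ‖H (ω, r)‖ ∂(Measure.volumeIoiPow (d-1)) ≤ M * R := by
    intro ω
    have heqn : ∀ r : Ioi (0:ℝ),
        (((r : ℝ) ^ (d-1)).toNNReal : ℝ≥0) • ‖H (ω, r)‖ = ‖G (ω, r)‖ := by
      intro r
      have hr0 : (0:ℝ) < r := r.2
      rw [← hsmul ω r]
      simp [NNReal.smul_def, Real.coe_toNNReal _ (pow_nonneg hr0.le _), norm_smul,
        abs_of_nonneg (pow_nonneg hr0.le _)]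
      exact Or.inl (by rw [abs_of_nonneg hr0.le])
    have h1 : ∫ r : Ioi (0:ℝ), ‖H (ω, r)‖ ∂(Measure.volumeIoiPow (d-1)) =
        ∫ r in Ioi (0:ℝ), ‖fderiv ℝ φ (x - r • (ω:E)) (ω:E)‖ := by
      rw [Measure.volumeIoiPow]
      simp only [ENNReal.ofReal]
      rw [integral_withDensity_eq_integral_smul hmeasd]
      refine Eq.trans (integral_congr_ae (ae_of_all _ fun r => ?_))
        (integral_subtype_comap measurableSet_Ioi
          (fun t : ℝ => ‖fderiv ℝ φ (x - t • (ω:E)) (ω:E)‖))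
      exact heqn r
    rw [h1]
    have h2 : ∫ r in Ioi (0:ℝ), ‖fderiv ℝ φ (x - r • (ω:E)) (ω:E)‖ ≤
        ∫ r in Ioi (0:ℝ), (Ioc (0:ℝ) R).indicator (fun _ => M) r := by
      apply setIntegral_mono_on ((hFint ω).norm)
      · exact (integrable_indicator_iff measurableSet_Ioc).2 <| (integrableOn_const_iff enorm_ne_top).2 <|
          Or.inr <| lt_of_le_of_lt (Measure.restrict_apply_le _ _) measure_Ioc_lt_top
      · exact measurableSet_Ioi
      · intro r hr
        by_cases hrR : r ≤ R
        · rw [indicator_of_mem (by exact ⟨hr, hrR⟩)]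
          calc ‖fderiv ℝ φ (x - r • (ω:E)) (ω:E)‖
              ≤ ‖fderiv ℝ φ (x - r • (ω:E))‖ * ‖(ω:E)‖ :=
                ContinuousLinearMap.le_opNorm _ _
            _ ≤ M := by rw [hω1, mul_one]; exact hM _
        · rw [indicator_of_notMem (by simp [mem_Ioc, hrR])]
          have hrabs : ‖x‖ + K < |r| := by
            rw [lt_abs]; left; push_neg at hrR; linarith
          rw [hDzero _ (hnormbig ω r hrabs)]
          simp
    refine h2.trans ?_
    rw [integral_indicator measurableSet_Ioc, setIntegral_const,
      measureReal_def, Measure.restrict_apply measurableSet_Ioc]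
    have hinter : Ioc (0:ℝ) R ∩ Ioi 0 = Ioc 0 R := by
      rw [inter_eq_left]; exact Ioc_subset_Ioi_self
    rw [hinter, Real.volume_Ioc, smul_eq_mul]
    rw [ENNReal.toReal_ofReal (by linarith)]
    nlinarith
  -- measurability and integrability on the product
  have hGcont : Continuous G := by
    apply Continuous.clm_apply
    · exact hDc.comp (by fun_prop)
    · fun_prop
  have hHcont : Continuous H := by
    apply Continuous.fun_smul
    · exact Continuous.inv₀ (by fun_prop) (fun p => pow_ne_zero _ (ne_of_gt p.2.2))
    · exact hGcont
  set ν := μ.toSphere.prod (Measure.volumeIoiPow (d-1)) with hν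
  have hHmeas : AEStronglyMeasurable H ν := hHcont.aestronglyMeasurable
  have h2meas : AEStronglyMeasurable
      (fun ω : sphere (0:E) 1 => ∫ r : Ioi (0:ℝ), ‖H (ω, r)‖ ∂(Measure.volumeIoiPow (d-1)))
      μ.toSphere := hHmeas.norm.integral_prod_right'
  have h2int : Integrable
      (fun ω : sphere (0:E) 1 => ∫ r : Ioi (0:ℝ), ‖H (ω, r)‖ ∂(Measure.volumeIoiPow (d-1)))
      μ.toSphere := by
    refine Integrable.mono' (integrable_const (M * R)) h2meas (ae_of_all _ fun ω => ?_)
    rw [Real.norm_eq_abs, abs_of_nonneg (integral_nonneg fun r => norm_nonneg _)]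
    exact hslicenorm ω
  have hHint : Integrable H ν :=
    (integrable_prod_iff hHmeas).2 ⟨ae_of_all _ fun ω => hslice ω, h2int⟩
  -- connect with the function on `E`
  have hcomp : ∀ z : ({0}ᶜ : Set E),
      (fun z : E => (‖z‖ ^ d)⁻¹ • (fderiv ℝ φ (x - z) z)) (z : E) =
        H (homeomorphUnitSphereProd E z) := by
    rintro ⟨z, hz⟩
    have hz0 : z ≠ (0:E) := hz
    have hn0 : ‖z‖ ≠ 0 := norm_ne_zero_iff.2 hz0
    simp only [hHdef, hGdef, homeomorphUnitSphereProd_apply_fst_coe,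
      homeomorphUnitSphereProd_apply_snd_coe]
    rw [smul_inv_smul₀ hn0, ContinuousLinearMap.map_smul, smul_smul]
    congr 1
    rw [← mul_inv]
    congr 1
    rw [← pow_succ, Nat.sub_add_cancel hd1]
  have hcompfun : (fun z : ({0}ᶜ : Set E) =>
      (fun z : E => (‖z‖ ^ d)⁻¹ • (fderiv ℝ φ (x - z) z)) (z : E)) =
      H ∘ (homeomorphUnitSphereProd E) := funext hcomp
  have hmp := μ.measurePreserving_homeomorphUnitSphereProd
  have hemb := (homeomorphUnitSphereProd E).measurableEmbedding
  have hint : Integrable (fun z : E => (‖z‖ ^ d)⁻¹ • (fderiv ℝ φ (x - z) z)) μ := by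
    have h1 : Integrable (fun z : ({0}ᶜ : Set E) =>
        (fun z : E => (‖z‖ ^ d)⁻¹ • (fderiv ℝ φ (x - z) z)) (z : E))
        (μ.comap Subtype.val) := by
      rw [hcompfun]
      exact (hmp.integrable_comp_emb hemb).2 hHint
    have h2 := (integrable_subtype_comap' (measurableSet_singleton (0:E)).compl
      (fun z : E => (‖z‖ ^ d)⁻¹ • (fderiv ℝ φ (x - z) z))).1 h1
    have h3 : Integrable (fun z : E => (‖z‖ ^ d)⁻¹ • (fderiv ℝ φ (x - z) z))
      (μ.restrict ({(0:E)}ᶜ)) := h2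
    rwa [restrict_compl_singleton] at h3
  refine ⟨hint, ?_⟩
  calc ∫ z : E, (‖z‖ ^ d)⁻¹ • (fderiv ℝ φ (x - z) z) ∂μ
      = ∫ z in ({0}ᶜ : Set E), (‖z‖ ^ d)⁻¹ • (fderiv ℝ φ (x - z) z) ∂μ := by
        rw [restrict_compl_singleton]
    _ = ∫ z : ({0}ᶜ : Set E),
          (fun z : E => (‖z‖ ^ d)⁻¹ • (fderiv ℝ φ (x - z) z)) (z : E)
          ∂(μ.comap Subtype.val) :=
        (integral_subtype_comap (measurableSet_singleton (0:E)).compl _).symm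
    _ = ∫ p, H p ∂ν := by rw [hcompfun]; exact hmp.integral_comp hemb H
    _ = ∫ ω : sphere (0:E) 1, ∫ r : Ioi (0:ℝ), H (ω, r) ∂(Measure.volumeIoiPow (d-1))
          ∂μ.toSphere := integral_prod H hHint
    _ = ∫ _ω : sphere (0:E) 1, φ x ∂μ.toSphere := by
        exact integral_congr_ae (ae_of_all _ fun ω => hsliceval ω)
    _ = (μ.toSphere (univ : Set (sphere (0:E) 1))).toReal • φ x := by rw [integral_const]; rfl

/-- Degree-zero case of the homotopy equation (Lemma 0(2)): reproduction formula
`φ(x) = (Γ(n/2)/(2π^{n/2})) ∫ Σᵢ ((xᵢ-yᵢ)/‖x-y‖ⁿ) ∂ᵢφ(y) dy`. -/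
theorem stmt_2 (n : ℕ) (hn : 2 ≤ n) (φ : EuclideanSpace ℝ (Fin n) → ℂ)
    (hφ : ContDiff ℝ 2 φ) (hsupp : HasCompactSupport φ) :
    ∀ x : EuclideanSpace ℝ (Fin n),
      Integrable (fun y : EuclideanSpace ℝ (Fin n) =>
        ∑ i : Fin n, (((x i - y i) / ‖x - y‖ ^ n : ℝ) : ℂ) *
          fderiv ℝ φ y (EuclideanSpace.single i 1)) ∧
      φ x = ((Real.Gamma ((n : ℝ) / 2) / (2 * Real.pi ^ ((n : ℝ) / 2)) : ℝ) : ℂ) *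
        ∫ y : EuclideanSpace ℝ (Fin n),
          ∑ i : Fin n, (((x i - y i) / ‖x - y‖ ^ n : ℝ) : ℂ) *
            fderiv ℝ φ y (EuclideanSpace.single i 1) := by
  intro x
  haveI : Nonempty (Fin n) := Fin.pos_iff_nonempty.1 (by omega)
  have key := stmt2_polar (volume : Measure (EuclideanSpace ℝ (Fin n))) φ hφ hsupp x
  have hdim : Module.finrank ℝ (EuclideanSpace ℝ (Fin n)) = n := finrank_euclideanSpace_fin
  rw [hdim] at key
  have hrw : (fun y : EuclideanSpace ℝ (Fin n) =>
      ∑ i : Fin n, (((x i - y i) / ‖x - y‖ ^ n : ℝ) : ℂ) *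
        fderiv ℝ φ y (EuclideanSpace.single i 1)) =
      fun y => (fun z : EuclideanSpace ℝ (Fin n) =>
        (‖z‖ ^ n)⁻¹ • (fderiv ℝ φ (x - z) z)) (x - y) := by
    funext y
    have hDsum : fderiv ℝ φ y (x - y) =
        ∑ i, (x - y) i • fderiv ℝ φ y (EuclideanSpace.single i 1) := by
      conv_lhs => rw [← euclid_sum_single (x - y)]
      rw [map_sum]
      exact Finset.sum_congr rfl fun i _ => by rw [ContinuousLinearMap.map_smul]
    show _ = (‖x - y‖ ^ n)⁻¹ • (fderiv ℝ φ (x - (x - y)) (x - y))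
    rw [sub_sub_cancel, hDsum, Finset.smul_sum]
    refine Finset.sum_congr rfl fun i _ => ?_
    rw [smul_smul, ← Complex.real_smul]
    congr 1
    rw [PiLp.sub_apply, div_eq_inv_mul]
  constructor
  · rw [hrw]
    exact key.1.comp_sub_left x
  · rw [hrw]
    have hchg : (∫ y : EuclideanSpace ℝ (Fin n),
        (fun z : EuclideanSpace ℝ (Fin n) =>
          (‖z‖ ^ n)⁻¹ • (fderiv ℝ φ (x - z) z)) (x - y)) =
        ∫ z : EuclideanSpace ℝ (Fin n), (‖z‖ ^ n)⁻¹ • (fderiv ℝ φ (x - z) z) :=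
      integral_sub_left_eq_self (fun z : EuclideanSpace ℝ (Fin n) =>
        (‖z‖ ^ n)⁻¹ • (fderiv ℝ φ (x - z) z)) volume x
    rw [hchg, key.2]
    -- compute the constant
    have hT : (volume.toSphere (univ : Set (sphere (0:EuclideanSpace ℝ (Fin n)) 1))).toReal
        = (n : ℝ) * (Real.sqrt Real.pi ^ n / Real.Gamma ((n:ℝ) / 2 + 1)) := by
      rw [Measure.toSphere_apply_univ, hdim, EuclideanSpace.volume_ball]
      rw [ENNReal.ofReal_one, one_pow, one_mul, ENNReal.toReal_mul, ENNReal.toReal_natCast,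
        Fintype.card_fin, ENNReal.toReal_ofReal]
      positivity
    have hsqrt : Real.sqrt Real.pi ^ n = Real.pi ^ ((n:ℝ) / 2) := by
      rw [Real.sqrt_eq_rpow, ← Real.rpow_natCast (Real.pi ^ ((1:ℝ)/2)) n,
        ← Real.rpow_mul Real.pi_pos.le]
      norm_num
      ring_nf
    have hGpos : 0 < Real.Gamma ((n:ℝ) / 2) := Real.Gamma_pos_of_pos (by positivity)
    have hppos : 0 < Real.pi ^ ((n:ℝ) / 2) := Real.rpow_pos_of_pos Real.pi_pos _
    have hn0 : (0:ℝ) < (n:ℝ) := by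
      have : 0 < n := by omega
      exact_mod_cast this
    have hGam : Real.Gamma ((n:ℝ) / 2 + 1) = ((n:ℝ)/2) * Real.Gamma ((n:ℝ)/2) :=
      Real.Gamma_add_one (by positivity)
    have hc : (Real.Gamma ((n : ℝ) / 2) / (2 * Real.pi ^ ((n : ℝ) / 2))) *
        ((n : ℝ) * (Real.pi ^ ((n:ℝ)/2) / Real.Gamma ((n:ℝ) / 2 + 1))) = 1 := by
      rw [hGam]
      field_simp
    rw [hT, hsqrt]
    rw [Complex.real_smul, ← mul_assoc, ← Complex.ofReal_mul, hc, Complex.ofReal_one, one_mul]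
end

section
/- Let A be a complex unital Banach algebra, let a ∈ A with ‖a‖ < 1, and let L ≥ 1 be an integer. Then the series Σ_{j=L}^∞ aʲ/j converges absolutely in A, and (1 − a) · exp(Σ_{j=1}^{L−1} aʲ/j) = exp(− Σ_{j=L}^∞ aʲ/j), where the finite sum Σ_{j=1}^{L−1} aʲ/j is interpreted as 0 when L = 1. -/
open NormedSpace Set


/-- Summability of the log tail series. -/
lemma logTail_summable_norm {A : Type*} [NormedRing A] [NormedAlgebra ℂ A] (a : A) (ha : ‖a‖ < 1) (L : ℕ)
    (hL : 1 ≤ L) :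
    Summable (fun j : ℕ => ‖(((j + L : ℕ) : ℂ))⁻¹ • a ^ (j + L)‖) := by
  have h0 : (0:ℝ) ≤ ‖a‖ := norm_nonneg a
  refine Summable.of_nonneg_of_le (fun j => norm_nonneg _)
    (fun j => ?_) (((summable_geometric_of_lt_one h0 ha)).mul_right (‖a‖ ^ L))
  rw [norm_smul]
  have h1 : ‖(((j + L : ℕ) : ℂ))⁻¹‖ ≤ 1 := by
    rw [norm_inv, Complex.norm_natCast]
    have : (1:ℝ) ≤ ((j + L : ℕ) : ℝ) := by exact_mod_cast Nat.one_le_iff_ne_zero.mpr (by omega)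
    rw [inv_le_one_iff₀]; right; exact this
  calc ‖(((j + L : ℕ) : ℂ))⁻¹‖ * ‖a ^ (j + L)‖ ≤ 1 * ‖a ^ (j + L)‖ := by
        exact mul_le_mul_of_nonneg_right h1 (norm_nonneg _)
    _ = ‖a ^ (j + L)‖ := one_mul _
    _ ≤ ‖a‖ ^ (j + L) := norm_pow_le' a (by omega)
    _ = ‖a‖ ^ j * ‖a‖ ^ L := pow_add _ _ _

/-- The key identity in a *commutative* Banach algebra. -/
lemma comm_core {B : Type*} [NormedCommRing B] [NormedAlgebra ℂ B] [CompleteSpace B]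
    (b : B) (hb : ‖b‖ < 1) :
    (1 - b) * exp (∑' j : ℕ, (((j + 1 : ℕ) : ℂ))⁻¹ • b ^ (j + 1)) = 1 := by
  have h0 : (0:ℝ) ≤ ‖b‖ := norm_nonneg b
  set T : ℝ := 2 / (1 + ‖b‖) with hT
  have hden : (0:ℝ) < 1 + ‖b‖ := by linarith
  have hT1 : 1 < T := by
    rw [hT, lt_div_iff₀ hden]; linarith
  have hTb : T * ‖b‖ < 1 := by
    rw [hT, div_mul_eq_mul_div, div_lt_one hden]; linarith
  have hTpos : (0:ℝ) < T := by linarith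
  set s : Set ℝ := Ioo (-T) T with hs
  have hmem : ∀ t ∈ s, |t| * ‖b‖ < 1 := by
    intro t ht
    have : |t| < T := abs_lt.mpr ⟨ht.1, ht.2⟩
    calc |t| * ‖b‖ ≤ T * ‖b‖ := mul_le_mul_of_nonneg_right this.le h0
      _ < 1 := hTb
  -- the series and its termwise derivative
  set g : ℕ → ℝ → B := fun n t => (((n + 1 : ℕ) : ℂ))⁻¹ • (t ^ (n+1) • b ^ (n+1)) with hg
  set g' : ℕ → ℝ → B := fun n t => t ^ n • b ^ (n+1) with hg'
  have hderiv : ∀ n t, HasDerivAt (g n) (g' n t) t := by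
    intro n t
    have h1 : HasDerivAt (fun t : ℝ => t ^ (n+1) • b ^ (n+1))
        ((((n:ℝ) + 1) * t ^ n) • b ^ (n+1)) t := by
      simpa using (hasDerivAt_pow (n+1) t).smul_const (b ^ (n+1))
    have h2 := h1.const_smul ((((n + 1 : ℕ) : ℂ))⁻¹)
    have h3 : (((n + 1 : ℕ) : ℂ))⁻¹ • ((((n:ℝ) + 1) * t ^ n) • b ^ (n+1)) = g' n t := by
      rw [mul_smul, ← Complex.coe_smul ((n:ℝ)+1) (t ^ n • b ^ (n+1)),
        show ((((n:ℝ) + 1 : ℝ)) : ℂ) = ((n + 1 : ℕ) : ℂ) by push_cast; ring,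
        inv_smul_smul₀ (Nat.cast_ne_zero.mpr (Nat.succ_ne_zero n))]
    rw [← h3]
    exact h2
  set u : ℕ → ℝ := fun n => ‖b‖ * (T * ‖b‖) ^ n with hu
  have hu_sum : Summable u :=
    (summable_geometric_of_lt_one (by positivity) hTb).mul_left _
  have hbound : ∀ n t, t ∈ s → ‖g' n t‖ ≤ u n := by
    intro n t ht
    have habs : |t| ≤ T := (abs_lt.mpr ⟨ht.1, ht.2⟩).le
    rw [hg', hu, norm_smul, Real.norm_eq_abs]
    calc |t ^ n| * ‖b ^ (n+1)‖ ≤ T ^ n * ‖b‖ ^ (n+1) := by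
          rw [abs_pow]
          exact mul_le_mul (pow_le_pow_left₀ (abs_nonneg t) habs n)
            (norm_pow_le' b (Nat.succ_pos n)) (norm_nonneg _) (by positivity)
      _ = ‖b‖ * (T * ‖b‖) ^ n := by rw [mul_pow, pow_succ]; ring
  have hg0 : Summable fun n => g n 0 := by
    have : (fun n => g n 0) = fun _ => (0 : B) := by
      funext n; simp [hg]
    rw [this]; exact summable_zero
  have h0mem : (0:ℝ) ∈ s := ⟨by linarith, hTpos⟩
  -- differentiability of the sum
  have hF : ∀ t ∈ s, HasDerivAt (fun z => ∑' n, g n z) (∑' n, g' n t) t := by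
    intro t ht
    exact hasDerivAt_tsum_of_isPreconnected hu_sum isOpen_Ioo (convex_Ioo _ _).isPreconnected
      (fun n y hy => hderiv n y) (fun n y hy => hbound n y hy) h0mem hg0 ht
  set F : ℝ → B := fun z => ∑' n, g n z with hFdef
  set G : ℝ → B := fun t => ∑' n, g' n t with hGdef
  -- identify the derivative series
  have hG : ∀ t ∈ s, (1 - t • b) * G t = b := by
    intro t ht
    have hnorm : ‖t • b‖ < 1 := by
      rw [norm_smul, Real.norm_eq_abs]; exact hmem t ht
    have hsum : Summable fun n => (t • b) ^ n := summable_geometric_of_norm_lt_one hnorm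
    have : G t = (∑' n, (t • b) ^ n) * b := by
      show (∑' n, g' n t) = _
      rw [← hsum.tsum_mul_right]
      refine tsum_congr fun n => ?_
      show t ^ n • b ^ (n+1) = (t • b) ^ n * b
      rw [smul_pow, smul_mul_assoc, ← pow_succ]
    rw [this, ← mul_assoc, mul_neg_geom_series _ hnorm, one_mul]
  -- the function (1 - t b) exp(F t) has derivative 0
  set h : ℝ → B := fun t => (1 - t • b) * exp (F t) with hhdef
  have hd : ∀ t ∈ s, HasDerivAt h 0 t := by
    intro t ht
    have d1 : HasDerivAt (fun t : ℝ => 1 - t • b) (-b) t := by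
      simpa using ((hasDerivAt_id t).smul_const b).const_sub 1
    have dexp : HasDerivAt (fun z : ℝ => exp (F z)) (exp (F t) * G t) t := by
      have hfd : HasFDerivAt (exp) (exp (F t) • (1 : B →L[ℂ] B)) (F t) := hasFDerivAt_exp
      have := (hfd.restrictScalars ℝ).comp_hasDerivAt t (hF t ht)
      exact this
    have := d1.mul dexp
    convert this using 1
    · rfl
    have key : (1 - t • b) * (exp (F t) * G t) = exp (F t) * ((1 - t • b) * G t) := by ring
    rw [key, hG t ht]
    ring
  -- constancy on [0,1]
  have hsub : Icc (0:ℝ) 1 ⊆ s := by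
    intro t ht
    exact ⟨by linarith [ht.1], by linarith [ht.2]⟩
  have hcont : ContinuousOn h (Icc 0 1) := fun t ht =>
    ((hd t (hsub ht)).continuousAt).continuousWithinAt
  have hconst := constant_of_has_deriv_right_zero hcont
    (fun t ht => (hd t (hsub ⟨ht.1, ht.2.le⟩)).hasDerivWithinAt) 1 (by norm_num)
  -- evaluate at the endpoints
  have h1 : h 1 = (1 - b) * exp (∑' j : ℕ, (((j + 1 : ℕ) : ℂ))⁻¹ • b ^ (j + 1)) := by
    show (1 - (1:ℝ) • b) * exp (∑' n, g n 1) = _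
    rw [one_smul]
    congr 2
    refine tsum_congr fun n => ?_
    simp [hg]
  have h0' : h 0 = 1 := by
    have hF0 : F 0 = 0 := by
      show (∑' n, g n 0) = 0
      have : (fun n => g n 0) = fun _ => (0 : B) := by funext n; simp [hg]
      rw [this, tsum_zero]
    show (1 - (0:ℝ) • b) * exp (F 0) = 1
    simp [hF0, exp_zero]
  rw [← h1, hconst, h0']


section
variable {A : Type*} [NormedRing A] [NormedAlgebra ℂ A] [CompleteSpace A]

/-- Transfer of the commutative identity to a general Banach algebra. -/
lemma noncomm_core (a : A) (ha : ‖a‖ < 1) :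
    (1 - a) * exp (∑' j : ℕ, (((j + 1 : ℕ) : ℂ))⁻¹ • a ^ (j + 1)) = 1 := by
  set B := Algebra.elemental ℂ a with hB
  letI : NormedCommRing B := { (inferInstance : NormedRing B) with mul_comm := mul_comm }
  set b : B := ⟨a, Algebra.elemental.self_mem ℂ a⟩ with hbdef
  have hnb : ‖b‖ = ‖a‖ := rfl
  have hb : ‖b‖ < 1 := by rw [hnb]; exact ha
  have key := comm_core b hb
  have hval : Continuous (B.val : B → A) := continuous_subtype_val
  have hbsum : Summable (fun j : ℕ => (((j + 1 : ℕ) : ℂ))⁻¹ • b ^ (j + 1)) :=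
    Summable.of_norm (logTail_summable_norm b hb 1 le_rfl)
  have htsum : (B.val : B → A) (∑' j : ℕ, (((j + 1 : ℕ) : ℂ))⁻¹ • b ^ (j + 1))
      = ∑' j : ℕ, (((j + 1 : ℕ) : ℂ))⁻¹ • a ^ (j + 1) := by
    rw [← (hbsum.hasSum.map (B.val : B →ₐ[ℂ] A) hval).tsum_eq]
    refine tsum_congr fun j => ?_
    show (B.val) ((((j + 1 : ℕ) : ℂ))⁻¹ • b ^ (j + 1)) = _
    rw [map_smul, map_pow]
    rfl
  letI : NormedAlgebra ℚ B := NormedAlgebra.restrictScalars ℚ ℂ B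
  letI : NormedAlgebra ℚ A := NormedAlgebra.restrictScalars ℚ ℂ A
  have := congrArg (B.val : B → A) key
  rw [map_mul, map_one, map_exp (B.val : B →ₐ[ℂ] A) hval, htsum] at this
  exact this

end

/-- Key identity of Lemma 5: in a complex unital Banach algebra, for `‖a‖ < 1`,
`(1-a)·exp(Σ_{j=1}^{L-1} aʲ/j) = exp(-Σ_{j=L}^∞ aʲ/j)`, the tail series converging
absolutely. -/
theorem stmt_11 (A : Type*) [NormedRing A] [NormedAlgebra ℂ A] [CompleteSpace A]
    (a : A) (ha : ‖a‖ < 1) (L : ℕ) (hL : 1 ≤ L) :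
    Summable (fun j : ℕ => ‖(((j + L : ℕ) : ℂ))⁻¹ • a ^ (j + L)‖) ∧
    (1 - a) * NormedSpace.exp (∑ j ∈ Finset.Ico 1 L, ((j : ℂ))⁻¹ • a ^ j)
      = NormedSpace.exp (-(∑' j : ℕ, (((j + L : ℕ) : ℂ))⁻¹ • a ^ (j + L))) := by
  refine ⟨logTail_summable_norm a ha L hL, ?_⟩
  have hS1 : Summable (fun j : ℕ => (((j + 1 : ℕ) : ℂ))⁻¹ • a ^ (j + 1)) :=
    Summable.of_norm (logTail_summable_norm a ha 1 le_rfl)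
  set F : A := ∑ j ∈ Finset.Ico 1 L, ((j : ℂ))⁻¹ • a ^ j with hF
  set S1 : A := ∑' j : ℕ, (((j + 1 : ℕ) : ℂ))⁻¹ • a ^ (j + 1) with hS1def
  set SL : A := ∑' j : ℕ, (((j + L : ℕ) : ℂ))⁻¹ • a ^ (j + L) with hSLdef
  -- splitting of the series
  have hsplit : F + SL = S1 := by
    have h := Summable.sum_add_tsum_nat_add (L - 1) hS1
    have h1 : (∑' i : ℕ, (((i + (L-1) + 1 : ℕ) : ℂ))⁻¹ • a ^ (i + (L-1) + 1)) = SL := by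
      refine tsum_congr fun i => ?_
      have : i + (L - 1) + 1 = i + L := by omega
      rw [this]
    have h2 : (∑ i ∈ Finset.range (L-1), (((i + 1 : ℕ) : ℂ))⁻¹ • a ^ (i + 1)) = F := by
      rw [hF, Finset.sum_Ico_eq_sum_range]
      refine Finset.sum_congr rfl fun i _ => ?_
      have : 1 + i = i + 1 := by omega
      rw [this]
    rw [← h1, ← h2]
    exact h
  -- commutation facts
  have hpow : ∀ (c : ℂ) (i : ℕ) (d : ℂ) (j : ℕ), Commute (c • a ^ i) (d • a ^ j) := by
    intro c i d j
    exact (((Commute.refl a).pow_pow i j).smul_left c).smul_right d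
  have hS1F : Commute S1 F := by
    refine Commute.tsum_left _ fun i => ?_
    exact Commute.sum_right _ _ _ fun j _ => hpow _ _ _ _
  -- the core identity gives 1 - a = exp(-S1)
  have hcore := noncomm_core a ha
  letI : NormedAlgebra ℚ A := NormedAlgebra.restrictScalars ℚ ℂ A
  have hinv : exp S1 * exp (-S1) = 1 := by
    rw [← exp_add_of_commute ((Commute.refl S1).neg_right), add_neg_cancel, exp_zero]
  have h1a : (1 : A) - a = exp (-S1) := by
    calc (1:A) - a = (1 - a) * (exp S1 * exp (-S1)) := by rw [hinv, mul_one]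
      _ = ((1 - a) * exp S1) * exp (-S1) := by rw [mul_assoc]
      _ = exp (-S1) := by rw [hcore, one_mul]
  have hneg : -SL = -S1 + F := by rw [← hsplit]; abel
  calc (1 - a) * exp F = exp (-S1) * exp F := by rw [h1a]
    _ = exp (-S1 + F) := (exp_add_of_commute (hS1F.neg_left)).symm
    _ = exp (-SL) := by rw [← hneg]
end

section
/- Let X be a complex Banach space, let M be a bounded linear operator on X, and suppose there are constants C₀ ≥ 1 and R̃ > 0 such that ‖Mʲ‖ ≤ C₀ R̃ʲ for every integer j ≥ 1. Then for every C > 1 and every ξ with 0 < ξ < 1/R̃ there exists an integer L₀ ≥ 1 such that for all integers L ≥ L₀ and all z ∈ ℂ with |z| ≤ ξ, the operator M_L(z) := Id − (Id − zM) ∘ exp(Σ_{j=1}^{L−1} (zʲ/j) Mʲ) satisfies ‖M_L(z)‖ ≤ |z|^L R̃^L / C. -/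
open NormedSpace

set_option maxHeartbeats 1000000

lemma aux_geom {A : Type*} [NormedRing A] [CompleteSpace A] (x : A)
    (hx : Summable fun n : ℕ => x ^ n) : (1 - x) * ∑' n : ℕ, x ^ n = 1 := by
  have hx1 : Summable fun n : ℕ => x ^ (n + 1) := (summable_nat_add_iff 1).2 hx
  have h0 : ∑' n : ℕ, x ^ n = 1 + ∑' n : ℕ, x ^ (n + 1) := by
    simpa using Summable.tsum_eq_zero_add hx
  have h1 : x * ∑' n : ℕ, x ^ n = ∑' n : ℕ, x ^ (n + 1) := by
    rw [← hx.tsum_mul_left x]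
    exact tsum_congr fun n => (pow_succ' x n).symm
  rw [sub_mul, one_mul, h1, h0]
  abel


lemma aux_exp_sub_one {A : Type*} [NormedRing A] [NormedAlgebra ℂ A] [CompleteSpace A] (x : A) :
    ‖1 - exp x‖ ≤ Real.exp ‖x‖ - 1 := by
  have hs : Summable fun n : ℕ => ((Nat.factorial n : ℂ))⁻¹ • x ^ n := expSeries_summable' (𝕂 := ℂ) x
  have hs1 : Summable fun n : ℕ => ((Nat.factorial (n + 1) : ℂ))⁻¹ • x ^ (n + 1) :=
    (summable_nat_add_iff 1).2 hs
  have hreal : Summable fun n : ℕ => ‖x‖ ^ n / Nat.factorial n := Real.summable_pow_div_factorial ‖x‖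
  have hreal1 : Summable fun n : ℕ => ‖x‖ ^ (n + 1) / Nat.factorial (n + 1) :=
    (summable_nat_add_iff 1).2 hreal
  have hbound : ∀ n : ℕ, ‖((Nat.factorial (n + 1) : ℂ))⁻¹ • x ^ (n + 1)‖
      ≤ ‖x‖ ^ (n + 1) / Nat.factorial (n + 1) := by
    intro n
    rw [norm_smul, norm_inv]
    have h1 : ‖((Nat.factorial (n + 1) : ℂ))‖ = (Nat.factorial (n + 1) : ℝ) := by
      simp [Complex.norm_natCast]
    rw [h1, div_eq_inv_mul]
    have h2 : ‖x ^ (n + 1)‖ ≤ ‖x‖ ^ (n + 1) := norm_pow_le' x n.succ_pos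
    have h3 : (0:ℝ) < (Nat.factorial (n + 1) : ℝ) := by positivity
    exact mul_le_mul_of_nonneg_left h2 (by positivity)
  have hns : Summable fun n : ℕ => ‖((Nat.factorial (n + 1) : ℂ))⁻¹ • x ^ (n + 1)‖ :=
    Summable.of_nonneg_of_le (fun n => norm_nonneg _) hbound hreal1
  have hxe : exp x = 1 + ∑' n : ℕ, ((Nat.factorial (n + 1) : ℂ))⁻¹ • x ^ (n + 1) := by
    have := congrFun (exp_eq_tsum (𝕂 := ℂ) (𝔸 := A)) x
    rw [this, Summable.tsum_eq_zero_add hs]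
    simp
  have hnorm : ‖1 - exp x‖ ≤ ∑' n : ℕ, ‖x‖ ^ (n + 1) / Nat.factorial (n + 1) := by
    rw [hxe, sub_add_eq_sub_sub, sub_self, zero_sub, norm_neg]
    exact (norm_tsum_le_tsum_norm hns).trans (Summable.tsum_le_tsum hbound hns hreal1)
  refine hnorm.trans ?_
  have hexp : Real.exp ‖x‖ = 1 + ∑' n : ℕ, ‖x‖ ^ (n + 1) / Nat.factorial (n + 1) := by
    have := congrFun (exp_eq_tsum_div (𝔸 := ℝ)) ‖x‖
    rw [Real.exp_eq_exp_ℝ, this, Summable.tsum_eq_zero_add hreal]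
    simp
  rw [hexp, add_sub_cancel_left]

lemma aux_key {A : Type*} [NormedCommRing A] [NormedAlgebra ℂ A] [CompleteSpace A]
    (x : A) (c θ : ℝ) (hc : 0 ≤ c) (hθ0 : 0 < θ) (hθ1 : θ < 1)
    (hx : ∀ n : ℕ, ‖x ^ (n + 1)‖ ≤ c * θ ^ (n + 1)) :
    (1 - x) * exp (∑' n : ℕ, ((n : ℂ) + 1)⁻¹ • x ^ (n + 1)) = 1 := by
  classical
  obtain ⟨r, hr1, hr0, hrθ⟩ : ∃ r : ℝ, 1 < r ∧ 0 < r ∧ r * θ < 1 := by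
    refine ⟨(1 + θ⁻¹) / 2, ?_, ?_, ?_⟩
    · have : 1 < θ⁻¹ := (one_lt_inv₀ hθ0).2 hθ1
      linarith
    · positivity
    · have h : (1 + θ⁻¹) / 2 * θ = (θ + 1) / 2 := by field_simp
      rw [h]; linarith
  have hrθ0 : 0 ≤ r * θ := by positivity
  set s : Set ℝ := Set.Ioo (-r) r with hs_def
  have hs_open : IsOpen s := isOpen_Ioo
  have hs_conn : IsPreconnected s := (convex_Ioo _ _).isPreconnected
  have h0s : (0 : ℝ) ∈ s := ⟨by linarith, hr0⟩
  have h1s : (1 : ℝ) ∈ s := ⟨by linarith, hr1⟩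
  have hn1 : ∀ n : ℕ, ((n : ℂ) + 1) ≠ 0 := fun n => Nat.cast_add_one_ne_zero n
  -- the series and its derivative
  have hderiv : ∀ (n : ℕ) (t : ℝ),
      HasDerivAt (fun t : ℝ => ((t : ℂ) ^ (n + 1) / ((n : ℂ) + 1)) • x ^ (n + 1))
        (((t : ℂ) ^ n) • x ^ (n + 1)) t := by
    intro n t
    have h1 : HasDerivAt (fun w : ℂ => w ^ (n + 1) / ((n : ℂ) + 1))
        ((((n : ℕ) + 1 : ℕ) : ℂ) * (t : ℂ) ^ n / ((n : ℂ) + 1)) (t : ℂ) :=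
      (hasDerivAt_pow (n + 1) ((t : ℂ))).div_const ((n : ℂ) + 1)
    have h2 := h1.comp_ofReal
    have h3 := h2.smul_const (x ^ (n + 1))
    have he : ((((n : ℕ) + 1 : ℕ) : ℂ) * (t : ℂ) ^ n / ((n : ℂ) + 1)) = (t : ℂ) ^ n := by
      have hcast : (((n : ℕ) + 1 : ℕ) : ℂ) = ((n : ℂ) + 1) := by push_cast; ring
      rw [hcast, mul_comm, mul_div_assoc, div_self (hn1 n), mul_one]
    rw [he] at h3
    exact h3
  have hu : Summable (fun n : ℕ => (c * θ) * (r * θ) ^ n) :=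
    (summable_geometric_of_lt_one hrθ0 hrθ).mul_left _
  have hg'bound : ∀ (n : ℕ), ∀ t ∈ s, ‖((t : ℂ) ^ n) • x ^ (n + 1)‖ ≤ (c * θ) * (r * θ) ^ n := by
    intro n t ht
    have htr : |t| ≤ r := le_of_lt (abs_lt.2 ⟨ht.1, ht.2⟩)
    have he : ‖((t : ℂ) ^ n) • x ^ (n + 1)‖ = |t| ^ n * ‖x ^ (n + 1)‖ := by
      rw [norm_smul, norm_pow, Complex.norm_real, Real.norm_eq_abs]
    rw [he]
    have h1 : |t| ^ n ≤ r ^ n := pow_le_pow_left₀ (abs_nonneg t) htr n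
    calc |t| ^ n * ‖x ^ (n + 1)‖ ≤ r ^ n * (c * θ ^ (n + 1)) :=
          mul_le_mul h1 (hx n) (norm_nonneg _) (by positivity)
      _ = c * θ * (r * θ) ^ n := by rw [mul_pow]; ring
  have hg0 : Summable fun n : ℕ => (((0 : ℝ) : ℂ) ^ (n + 1) / ((n : ℂ) + 1)) • x ^ (n + 1) := by
    have : (fun n : ℕ => (((0 : ℝ) : ℂ) ^ (n + 1) / ((n : ℂ) + 1)) • x ^ (n + 1))
        = fun _ => (0 : A) := by
      funext n; simp
    rw [this]; exact summable_zero
  set gt : ℝ → A := fun t => ∑' n : ℕ, ((t : ℂ) ^ (n + 1) / ((n : ℂ) + 1)) • x ^ (n + 1)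
    with hgt_def
  set G : ℝ → A := fun t => ∑' n : ℕ, ((t : ℂ) ^ n) • x ^ (n + 1) with hG_def
  have hgt_deriv : ∀ y ∈ s, HasDerivAt gt (G y) y := fun y hy =>
    hasDerivAt_tsum_of_isPreconnected hu hs_open hs_conn
      (fun n y _ => hderiv n y) hg'bound h0s hg0 hy
  -- geometric series identity
  have hgeom : ∀ y ∈ s, (1 - (y : ℂ) • x) * G y = x := by
    intro y hy
    have hwr : ‖(y : ℂ)‖ ≤ r := by
      rw [Complex.norm_real, Real.norm_eq_abs]
      exact le_of_lt (abs_lt.2 ⟨hy.1, hy.2⟩)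
    have hsum_pow : Summable fun n : ℕ => ((y : ℂ) • x) ^ n := by
      apply Summable.of_norm_bounded (g := fun n => (‖(1 : A)‖ + c) * (r * θ) ^ n)
        ((summable_geometric_of_lt_one hrθ0 hrθ).mul_left _)
      intro n
      rw [smul_pow, norm_smul, norm_pow]
      cases n with
      | zero => simpa using (le_add_of_nonneg_right hc : ‖(1:A)‖ ≤ ‖(1:A)‖ + c)
      | succ m =>
        have h1 : ‖(y : ℂ)‖ ^ (m + 1) ≤ r ^ (m + 1) := pow_le_pow_left₀ (norm_nonneg _) hwr _
        calc ‖(y : ℂ)‖ ^ (m + 1) * ‖x ^ (m + 1)‖ ≤ r ^ (m + 1) * (c * θ ^ (m + 1)) :=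
              mul_le_mul h1 (hx m) (norm_nonneg _) (by positivity)
          _ = c * (r * θ) ^ (m + 1) := by rw [mul_pow]; ring
          _ ≤ (‖(1 : A)‖ + c) * (r * θ) ^ (m + 1) := by
              have hp : (0:ℝ) ≤ (r * θ) ^ (m + 1) := by positivity
              nlinarith [norm_nonneg (1 : A)]
    have hG : G y = x * ∑' n : ℕ, ((y : ℂ) • x) ^ n := by
      rw [hG_def, ← hsum_pow.tsum_mul_left x]
      refine tsum_congr fun n => ?_
      rw [smul_pow, mul_smul_comm, ← pow_succ']
    rw [hG, ← mul_assoc, mul_comm (1 - (y:ℂ) • x) x, mul_assoc,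
      aux_geom ((y:ℂ) • x) hsum_pow, mul_one]
  -- the function h and its derivative
  set h : ℝ → A := fun t => (1 - (t : ℂ) • x) * exp (gt t) with hh_def
  have hh_deriv : ∀ y ∈ s, HasDerivAt h 0 y := by
    intro y hy
    have hlin : HasDerivAt (fun t : ℝ => 1 - (t : ℂ) • x) (-x) y := by
      have h1 : HasDerivAt (fun t : ℝ => (t : ℂ)) 1 y := by
        exact Complex.ofRealCLM.hasDerivAt (x := y)
      have h2 := (h1.smul_const x).const_sub 1
      simpa using h2
    have hexp : HasDerivAt (fun t : ℝ => exp (gt t)) (exp (gt y) * G y) y := by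
      have hfd : HasFDerivAt (exp) (exp (gt y) • (1 : A →L[ℂ] A)) (gt y) :=
        hasFDerivAt_exp
      have hc2 := (hfd.restrictScalars ℝ).comp_hasDerivAt y (hgt_deriv y hy)
      simp [smul_eq_mul] at hc2
      exact hc2
    have hmul := hlin.mul hexp
    have hzero : -x * exp (gt y) + (1 - (y : ℂ) • x) * (exp (gt y) * G y) = 0 := by
      have e1 : (1 - (y : ℂ) • x) * (exp (gt y) * G y)
          = exp (gt y) * ((1 - (y : ℂ) • x) * G y) := by ring
      rw [e1, hgeom y hy]
      ring
    rw [hzero] at hmul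
    exact hmul
  -- h is constant
  have hconst : h 1 = h 0 := by
    have hle := Convex.norm_image_sub_le_of_norm_hasDerivWithin_le
      (f := h) (f' := fun _ => (0 : A)) (C := 0)
      (fun t ht => (hh_deriv t ht).hasDerivWithinAt)
      (fun t _ => le_of_eq norm_zero) (convex_Ioo _ _) h0s h1s
    have h2 : ‖h 1 - h 0‖ ≤ 0 := by simpa using hle
    exact sub_eq_zero.1 (norm_le_zero_iff.1 h2)
  have hh0 : h 0 = 1 := by
    have hgt0 : gt 0 = 0 := by
      rw [hgt_def]
      have : (fun n : ℕ => (((0:ℝ) : ℂ) ^ (n + 1) / ((n : ℂ) + 1)) • x ^ (n + 1))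
          = fun _ => (0 : A) := by funext n; simp
      simp only [this]
      exact tsum_zero
    show (1 - ((0:ℝ) : ℂ) • x) * exp (gt 0) = 1
    rw [hgt0]
    simp [exp_zero]
  have hgt1 : gt 1 = ∑' n : ℕ, ((n : ℂ) + 1)⁻¹ • x ^ (n + 1) := by
    rw [hgt_def]
    refine tsum_congr fun n => ?_
    norm_num
  have hh1 : h 1 = (1 - x) * exp (∑' n : ℕ, ((n : ℂ) + 1)⁻¹ • x ^ (n + 1)) := by
    show (1 - ((1:ℝ) : ℂ) • x) * exp (gt 1) = _
    rw [hgt1]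
    norm_num
  rw [← hh1, hconst, hh0]

lemma aux_key' {A : Type*} [NormedRing A] [NormedAlgebra ℂ A] [CompleteSpace A]
    (B : A) (c θ : ℝ) (hc : 0 ≤ c) (hθ0 : 0 < θ) (hθ1 : θ < 1)
    (hx : ∀ n : ℕ, ‖B ^ (n + 1)‖ ≤ c * θ ^ (n + 1)) :
    (1 - B) * exp (∑' n : ℕ, ((n : ℂ) + 1)⁻¹ • B ^ (n + 1)) = 1 := by
  classical
  set S : Subalgebra ℂ A := Algebra.elemental ℂ B with hS_def
  letI : NormedCommRing S :=
    { (inferInstance : NormedRing S) with mul_comm := mul_comm }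
  set b : S := ⟨B, Algebra.elemental.self_mem ℂ B⟩ with hb_def
  have hcoe_pow : ∀ n : ℕ, ((b ^ n : S) : A) = B ^ n := fun n => by
    push_cast [hb_def]; rfl
  have hnorm : ∀ y : S, ‖y‖ = ‖(y : A)‖ := fun y => rfl
  have hb : ∀ n : ℕ, ‖b ^ (n + 1)‖ ≤ c * θ ^ (n + 1) := fun n => by
    rw [hnorm, hcoe_pow]; exact hx n
  have key := aux_key b c θ hc hθ0 hθ1 hb
  set aS : S := ∑' n : ℕ, ((n : ℂ) + 1)⁻¹ • b ^ (n + 1) with haS_def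
  -- summability of the series in S
  have hsummand : ∀ n : ℕ, ‖((n : ℂ) + 1)⁻¹ • b ^ (n + 1)‖ ≤ (c * θ) * θ ^ n := by
    intro n
    rw [norm_smul]
    have h1 : ‖((n : ℂ) + 1)⁻¹‖ ≤ 1 := by
      have e : ((n : ℂ) + 1) = ((n + 1 : ℕ) : ℂ) := by push_cast; ring
      rw [e, norm_inv, Complex.norm_natCast]
      exact inv_le_one_of_one_le₀ (by exact_mod_cast Nat.one_le_iff_ne_zero.2 (Nat.succ_ne_zero n))
    calc ‖((n : ℂ) + 1)⁻¹‖ * ‖b ^ (n + 1)‖ ≤ 1 * (c * θ ^ (n + 1)) :=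
        mul_le_mul h1 (hb n) (norm_nonneg _) zero_le_one
      _ = (c * θ) * θ ^ n := by ring
  have hsum : Summable fun n : ℕ => ((n : ℂ) + 1)⁻¹ • b ^ (n + 1) :=
    Summable.of_norm_bounded
      ((summable_geometric_of_lt_one (le_of_lt hθ0) hθ1).mul_left _) hsummand
  -- push through the inclusion
  set ι : S →L[ℂ] A :=
    { toLinearMap := (Subalgebra.val S).toLinearMap, cont := continuous_subtype_val } with hι_def
  have hι_apply : ∀ y : S, ι y = (y : A) := fun y => rfl
  have hval : ((aS : S) : A) = ∑' n : ℕ, ((n : ℂ) + 1)⁻¹ • B ^ (n + 1) := by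
    rw [haS_def, ← hι_apply, ι.map_tsum hsum]
    refine tsum_congr fun n => ?_
    rw [map_smul, hι_apply, hcoe_pow]
  let +nondep : NormedAlgebra ℚ A := .restrictScalars ℚ ℂ A
  let +nondep : NormedAlgebra ℚ S := .restrictScalars ℚ ℂ S
  have hmap : ((exp aS : S) : A) = exp (∑' n : ℕ, ((n : ℂ) + 1)⁻¹ • B ^ (n + 1)) := by
    rw [← hval]
    exact map_exp (Subalgebra.val S) continuous_subtype_val aS
  have hcongr := congrArg (fun y : S => (y : A)) key
  have hone : (((1 : S) : A)) = 1 := rfl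
  have hcoe_mul : (((1 - b) * exp aS : S) : A) = ((1 : A) - B) * ((exp aS : S) : A) := by
    push_cast
    rfl
  rw [hcoe_mul, hmap] at hcongr
  exact hcongr.trans hone

/-- Lemma 5 (quantitative form): if `‖Mʲ‖ ≤ C₀ R̃ʲ` then for any `C > 1` and
`ξ < 1/R̃` there is `L₀` such that for `L ≥ L₀` and `|z| ≤ ξ` the regularised
operator `M_L(z) = Id - (Id - zM) exp(Σ_{j=1}^{L-1} (zʲ/j)Mʲ)` satisfies
`‖M_L(z)‖ ≤ |z|^L R̃^L / C`. -/
theorem stmt_12 (X : Type*) [NormedAddCommGroup X] [NormedSpace ℂ X] [CompleteSpace X]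
    (M : X →L[ℂ] X) (C₀ R : ℝ) (hC₀ : 1 ≤ C₀) (hR : 0 < R)
    (hM : ∀ j : ℕ, 1 ≤ j → ‖M ^ j‖ ≤ C₀ * R ^ j) :
    ∀ C : ℝ, 1 < C → ∀ ξ : ℝ, 0 < ξ → ξ < 1 / R →
      ∃ L₀ : ℕ, 1 ≤ L₀ ∧ ∀ L : ℕ, L₀ ≤ L → ∀ z : ℂ, ‖z‖ ≤ ξ →
        ‖(1 : X →L[ℂ] X) - ((1 : X →L[ℂ] X) - z • M) *
            NormedSpace.exp (∑ j ∈ Finset.Ico 1 L, (z ^ j / (j : ℂ)) • M ^ j)‖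
          ≤ ‖z‖ ^ L * R ^ L / C := by
  intro C hC ξ hξ0 hξR
  have hC0 : 0 < C := lt_trans one_pos hC
  set θ : ℝ := ξ * R with hθ_def
  have hθ0 : 0 < θ := mul_pos hξ0 hR
  have hθ1 : θ < 1 := by
    have h := (lt_div_iff₀ hR).1 hξR
    simpa [hθ_def] using h
  have h1θ : 0 < 1 - θ := by linarith
  set K : ℝ := C₀ / (1 - θ) with hK_def
  have hK0 : 0 < K := div_pos (by linarith) h1θ
  refine ⟨⌈C * K * Real.exp K⌉₊ + 1, Nat.le_add_left 1 _, ?_⟩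
  intro L hL z hz
  have hL1 : 1 ≤ L := by omega
  have hLreal : C * K * Real.exp K ≤ (L : ℝ) := by
    have h1 : C * K * Real.exp K ≤ (⌈C * K * Real.exp K⌉₊ : ℝ) := Nat.le_ceil _
    have h2 : ((⌈C * K * Real.exp K⌉₊ + 1 : ℕ) : ℝ) ≤ (L : ℝ) := by exact_mod_cast hL
    push_cast at h2
    linarith
  have hLpos : (0 : ℝ) < L := by exact_mod_cast hL1
  set B : X →L[ℂ] X := z • M with hB_def
  set θz : ℝ := ‖z‖ * R with hθz_def
  have hθz0 : 0 ≤ θz := mul_nonneg (norm_nonneg z) hR.le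
  have hθzθ : θz ≤ θ := mul_le_mul_of_nonneg_right hz hR.le
  have hBpow : ∀ j : ℕ, 1 ≤ j → ‖B ^ j‖ ≤ C₀ * θz ^ j := by
    intro j hj
    rw [hB_def, smul_pow, norm_smul (z ^ j) (M ^ j), norm_pow]
    calc ‖z‖ ^ j * ‖M ^ j‖ ≤ ‖z‖ ^ j * (C₀ * R ^ j) := by
          exact mul_le_mul_of_nonneg_left (hM j hj) (by positivity)
      _ = C₀ * θz ^ j := by rw [hθz_def, mul_pow]; ring
  set f : ℕ → (X →L[ℂ] X) := fun j => ((j : ℂ))⁻¹ • B ^ j with hf_def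
  have hinv_le : ∀ j : ℕ, 1 ≤ j → ‖((j : ℂ))⁻¹‖ ≤ 1 := by
    intro j hj
    rw [norm_inv, Complex.norm_natCast]
    exact inv_le_one_of_one_le₀ (by exact_mod_cast hj)
  have hfnorm : ∀ j : ℕ, ‖f j‖ ≤ C₀ * θ ^ j := by
    intro j
    rcases Nat.eq_zero_or_pos j with hj | hj
    · subst hj; simp [hf_def]; positivity
    · rw [hf_def]
      simp only
      rw [norm_smul ((j : ℂ))⁻¹ (B ^ j)]
      calc ‖((j : ℂ))⁻¹‖ * ‖B ^ j‖ ≤ 1 * (C₀ * θz ^ j) :=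
            mul_le_mul (hinv_le j hj) (hBpow j hj) (norm_nonneg _) zero_le_one
        _ = C₀ * θz ^ j := one_mul _
        _ ≤ C₀ * θ ^ j := by
            exact mul_le_mul_of_nonneg_left (pow_le_pow_left₀ hθz0 hθzθ j) (by linarith)
  have hsum_f : Summable f := by
    refine Summable.of_norm_bounded ?_ hfnorm
    exact (summable_geometric_of_lt_one hθ0.le hθ1).mul_left _
  have hsum_tail : Summable fun n : ℕ => f (n + L) := (summable_nat_add_iff L).2 hsum_f
  have hsum_f1 : Summable fun n : ℕ => f (n + 1) := (summable_nat_add_iff 1).2 hsum_f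
  set E : X →L[ℂ] X := ∑' n : ℕ, f (n + L) with hE_def
  set Amid : X →L[ℂ] X := ∑' n : ℕ, f (n + 1) with hA_def
  set T : X →L[ℂ] X := ∑ j ∈ Finset.Ico 1 L, (z ^ j / (j : ℂ)) • M ^ j with hT_def
  have hterm : ∀ j : ℕ, f j = (z ^ j / (j : ℂ)) • M ^ j := by
    intro j
    rw [hf_def]
    simp only
    rw [hB_def, smul_pow, smul_smul, div_eq_mul_inv, mul_comm]
  have hf0 : f 0 = 0 := by simp [hf_def]
  have hT_range : ∑ i ∈ Finset.range L, f i = T := by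
    obtain ⟨m, rfl⟩ : ∃ m, L = m + 1 := ⟨L - 1, by omega⟩
    rw [Finset.sum_range_succ', hf0, add_zero, hT_def, Finset.sum_Ico_eq_sum_range]
    simp only [Nat.add_sub_cancel]
    refine Finset.sum_congr rfl fun i _ => ?_
    rw [hterm (i + 1), Nat.add_comm 1 i]
  -- splitting the full series
  have hsplit : T + E = ∑' n : ℕ, f n := by
    rw [← hT_range, hE_def]
    exact Summable.sum_add_tsum_nat_add L hsum_f
  -- the key identity
  have hA_eq : ∑' n : ℕ, f n = ∑' n : ℕ, ((n : ℂ) + 1)⁻¹ • B ^ (n + 1) := by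
    rw [Summable.tsum_eq_zero_add hsum_f, hf0, zero_add]
    refine tsum_congr fun n => ?_
    rw [hf_def]
    simp only
    congr 2
    push_cast
    ring
  have hkey : (1 - B) * exp (∑' n : ℕ, f n) = 1 := by
    rw [hA_eq]
    refine aux_key' B C₀ θ (by linarith) hθ0 hθ1 fun n => ?_
    calc ‖B ^ (n + 1)‖ ≤ C₀ * θz ^ (n + 1) := hBpow (n + 1) (by omega)
      _ ≤ C₀ * θ ^ (n + 1) :=
        mul_le_mul_of_nonneg_left (pow_le_pow_left₀ hθz0 hθzθ _) (by linarith)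
  -- commutation
  have hBjE : ∀ j : ℕ, Commute (B ^ j) E := by
    intro j
    have h1 : B ^ j * E = ∑' n : ℕ, B ^ j * f (n + L) := (hsum_tail.tsum_mul_left _).symm
    have h2 : (∑' n : ℕ, f (n + L) * B ^ j) = E * B ^ j := hsum_tail.tsum_mul_right _
    have h3 : ∀ n : ℕ, B ^ j * f (n + L) = f (n + L) * B ^ j := by
      intro n
      rw [hf_def]
      simp only
      rw [mul_smul_comm, smul_mul_assoc, pow_mul_comm]
    unfold Commute SemiconjBy
    rw [h1, ← h2]
    exact tsum_congr h3
  have hfjE : ∀ j : ℕ, Commute (f j) E := fun j => by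
    have : f j = ((j : ℂ))⁻¹ • B ^ j := by rw [hf_def]
    rw [this]
    exact (hBjE j).smul_left _
  have hcomm : Commute T E := by
    rw [← hT_range]
    exact Commute.sum_left _ _ _ fun i _ => hfjE i
  let +nondep : NormedAlgebra ℚ (X →L[ℂ] X) := .restrictScalars ℚ ℂ (X →L[ℂ] X)
  have hexpTE : exp (∑' n : ℕ, f n) = exp T * exp E := by
    rw [← hsplit]
    exact exp_add_of_commute hcomm
  have hEneg : exp E * exp (-E) = 1 := by
    rw [← exp_add_of_commute ((Commute.refl E).neg_right), add_neg_cancel, exp_zero]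
  have hfinal : (1 - B) * exp T = exp (-E) := by
    have h1 : (1 - B) * exp (∑' n : ℕ, f n) * exp (-E) = exp (-E) := by
      rw [hkey, one_mul]
    rw [hexpTE, ← mul_assoc (1 - B) (exp T) (exp E),
      mul_assoc ((1 - B) * exp T) (exp E) (exp (-E)), hEneg, mul_one] at h1
    exact h1
  -- norm estimates
  have htail_bound : ∀ n : ℕ, ‖f (n + L)‖ ≤ (C₀ * θz ^ L / L) * θ ^ n := by
    intro n
    have hj : 1 ≤ n + L := by omega
    have he : f (n + L) = (((n + L : ℕ) : ℂ))⁻¹ • B ^ (n + L) := by rw [hf_def]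
    rw [he, norm_smul (((n + L : ℕ) : ℂ))⁻¹ (B ^ (n + L))]
    have h1 : ‖(((n + L : ℕ) : ℂ))⁻¹‖ = ((n + L : ℕ) : ℝ)⁻¹ := by
      rw [norm_inv, Complex.norm_natCast]
    rw [h1]
    have h2 : ((n + L : ℕ) : ℝ)⁻¹ ≤ ((L : ℕ) : ℝ)⁻¹ := by
      apply inv_anti₀ hLpos
      exact_mod_cast Nat.le_add_left L n
    have h3 : ‖B ^ (n + L)‖ ≤ C₀ * (θz ^ L * θ ^ n) := by
      calc ‖B ^ (n + L)‖ ≤ C₀ * θz ^ (n + L) := hBpow _ hj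
        _ = C₀ * (θz ^ L * θz ^ n) := by rw [pow_add]; ring
        _ ≤ C₀ * (θz ^ L * θ ^ n) := by
            have hle := pow_le_pow_left₀ hθz0 hθzθ n
            have hw : (0:ℝ) ≤ θz ^ L := by positivity
            exact mul_le_mul_of_nonneg_left
              (mul_le_mul_of_nonneg_left hle hw) (by linarith)
    calc ((n + L : ℕ) : ℝ)⁻¹ * ‖B ^ (n + L)‖ ≤ ((L : ℕ) : ℝ)⁻¹ * (C₀ * (θz ^ L * θ ^ n)) := by
          refine mul_le_mul h2 h3 (norm_nonneg _) (by positivity)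
      _ = (C₀ * θz ^ L / L) * θ ^ n := by field_simp
  have hsum_bound : Summable fun n : ℕ => (C₀ * θz ^ L / L) * θ ^ n :=
    (summable_geometric_of_lt_one hθ0.le hθ1).mul_left _
  have hsum_norm : Summable fun n : ℕ => ‖f (n + L)‖ :=
    Summable.of_nonneg_of_le (fun n => norm_nonneg _) htail_bound hsum_bound
  have hE_norm : ‖E‖ ≤ K / L * θz ^ L := by
    have h1 : ‖E‖ ≤ ∑' n : ℕ, (C₀ * θz ^ L / L) * θ ^ n := by
      rw [hE_def]
      exact (norm_tsum_le_tsum_norm hsum_norm).trans (Summable.tsum_le_tsum htail_bound hsum_norm hsum_bound)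
    have h2 : ∑' n : ℕ, (C₀ * θz ^ L / L) * θ ^ n = (C₀ * θz ^ L / L) * (1 - θ)⁻¹ := by
      rw [tsum_mul_left, tsum_geometric_of_lt_one hθ0.le hθ1]
    rw [h2] at h1
    calc ‖E‖ ≤ (C₀ * θz ^ L / L) * (1 - θ)⁻¹ := h1
      _ = K / L * θz ^ L := by rw [hK_def]; ring
  have hθz1 : θz ≤ 1 := hθzθ.trans hθ1.le
  have hθzL1 : θz ^ L ≤ 1 := pow_le_one₀ hθz0 hθz1
  have hKL : K / L * θz ^ L ≤ K := by
    have h1 : K / L ≤ K := div_le_self hK0.le (by exact_mod_cast hL1)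
    have h2 : K / L * θz ^ L ≤ K / L * 1 := by
      refine mul_le_mul_of_nonneg_left hθzL1 (by positivity)
    rw [mul_one] at h2
    exact h2.trans h1
  have hEK : ‖E‖ ≤ K := hE_norm.trans hKL
  -- final chain
  have hstep1 : ‖(1 : X →L[ℂ] X) - exp (-E)‖ ≤ Real.exp ‖E‖ - 1 := by
    have := aux_exp_sub_one (-E)
    rwa [norm_neg] at this
  have hstep2 : Real.exp ‖E‖ - 1 ≤ ‖E‖ * Real.exp ‖E‖ := by
    have h1 := Real.add_one_le_exp (-‖E‖)
    have h2 : Real.exp (-‖E‖) = (Real.exp ‖E‖)⁻¹ := Real.exp_neg _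
    have h3 := Real.exp_pos ‖E‖
    rw [h2] at h1
    have h4 : (1 - ‖E‖) ≤ (Real.exp ‖E‖)⁻¹ := by linarith
    have h5 := mul_le_mul_of_nonneg_right h4 h3.le
    rw [inv_mul_cancel₀ (ne_of_gt h3)] at h5
    nlinarith
  have hstep3 : ‖E‖ * Real.exp ‖E‖ ≤ (K / L * θz ^ L) * Real.exp K := by
    refine mul_le_mul hE_norm (Real.exp_le_exp.2 hEK) (Real.exp_pos _).le ?_
    positivity
  have hstep4 : (K / L * θz ^ L) * Real.exp K ≤ θz ^ L / C := by
    have h1 : K * Real.exp K / L ≤ 1 / C := by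
      rw [div_le_div_iff₀ hLpos hC0]
      nlinarith [Real.exp_pos K]
    calc (K / L * θz ^ L) * Real.exp K = (K * Real.exp K / L) * θz ^ L := by ring
      _ ≤ (1 / C) * θz ^ L := by
          refine mul_le_mul_of_nonneg_right h1 (by positivity)
      _ = θz ^ L / C := by ring
  have hθzpow : θz ^ L = ‖z‖ ^ L * R ^ L := by rw [hθz_def, mul_pow]
  calc ‖(1 : X →L[ℂ] X) - (1 - B) * exp T‖ = ‖(1 : X →L[ℂ] X) - exp (-E)‖ := by
        rw [hfinal]
    _ ≤ Real.exp ‖E‖ - 1 := hstep1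
    _ ≤ ‖E‖ * Real.exp ‖E‖ := hstep2
    _ ≤ (K / L * θz ^ L) * Real.exp K := hstep3
    _ ≤ θz ^ L / C := hstep4
    _ = ‖z‖ ^ L * R ^ L / C := by rw [hθzpow]
end

section
/- Let X be a complex Banach space, M a bounded linear operator on X, z ∈ ℂ, and L ≥ 1 an integer. Set E := exp(Σ_{j=1}^{L−1} (zʲ/j) Mʲ) (interpreted as Id when L = 1) and M_L(z) := Id − (Id − zM) ∘ E. Then for every integer k ≥ 0, the kernel of (Id − M_L(z))^k equals the kernel of (Id − zM)^k. In particular, for z ≠ 0, a vector x ∈ X lies in the generalized eigenspace ⋃_k ker((M − (1/z)·Id)^k) of M for the eigenvalue 1/z if and only if x lies in the generalized eigenspace ⋃_k ker((M_L(z) − Id)^k) of M_L(z) for the eigenvalue 1. -/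
/-- Equation (3.7): the regularised operator `M_L(z)` has the same generalized
eigenvectors for the eigenvalue 1 as `M` has for `1/z`:
`ker((Id - M_L(z))^k) = ker((Id - zM)^k)` for all `k`. -/
theorem stmt_13 (X : Type*) [NormedAddCommGroup X] [NormedSpace ℂ X] [CompleteSpace X]
    (M : X →L[ℂ] X) (z : ℂ) (L : ℕ) (hL : 1 ≤ L)
    (E ML : X →L[ℂ] X)
    (hE : E = NormedSpace.exp (∑ j ∈ Finset.Ico 1 L, (z ^ j / (j : ℂ)) • M ^ j))
    (hML : ML = 1 - (1 - z • M) * E) :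
    (∀ k : ℕ, LinearMap.ker (((1 - ML) ^ k : X →L[ℂ] X) : X →ₗ[ℂ] X)
        = LinearMap.ker ((((1 : X →L[ℂ] X) - z • M) ^ k : X →L[ℂ] X) : X →ₗ[ℂ] X)) ∧
    (z ≠ 0 → ∀ x : X,
      (∃ k : ℕ, x ∈ LinearMap.ker (((M - (1 / z) • (1 : X →L[ℂ] X)) ^ k : X →L[ℂ] X) : X →ₗ[ℂ] X)) ↔
      (∃ k : ℕ, x ∈ LinearMap.ker (((ML - 1) ^ k : X →L[ℂ] X) : X →ₗ[ℂ] X))) := by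
  set A : X →L[ℂ] X := ∑ j ∈ Finset.Ico 1 L, (z ^ j / (j : ℂ)) • M ^ j with hA
  set f : X →L[ℂ] X := 1 - z • M with hf
  have hfA : Commute f A := by
    apply Commute.sum_right
    intro j _
    exact ((Commute.one_left (M ^ j)).sub_left
      (((Commute.refl M).pow_right j).smul_left z)).smul_right _
  have hfE : Commute f E := by
    rw [hE]; exact hfA.exp_right
  haveI : Invertible E := hE ▸ NormedSpace.invertibleExpOfMemBall (𝕂 := ℂ) (x := A)
    ((NormedSpace.expSeries_radius_eq_top ℂ (X →L[ℂ] X)).symm ▸ edist_lt_top _ _)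
  have hinj : ∀ k : ℕ, Function.Injective (E ^ k : X →L[ℂ] X) := by
    intro k x y hxy
    have h := congrArg (⅟ (E ^ k) : X →L[ℂ] X) hxy
    rwa [← ContinuousLinearMap.mul_apply, ← ContinuousLinearMap.mul_apply, invOf_mul_self,
      ContinuousLinearMap.one_apply, ContinuousLinearMap.one_apply] at h
  have h1ML : (1 : X →L[ℂ] X) - ML = E * f := by
    rw [hML, sub_sub_cancel, hfE.eq]
  have hker : ∀ k : ℕ, LinearMap.ker (((1 - ML) ^ k : X →L[ℂ] X) : X →ₗ[ℂ] X) = LinearMap.ker ((f ^ k : X →L[ℂ] X) : X →ₗ[ℂ] X) := by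
    intro k
    rw [h1ML, hfE.symm.mul_pow]
    ext x
    simp only [LinearMap.mem_ker, ContinuousLinearMap.coe_coe,
      ContinuousLinearMap.mul_apply]
    constructor
    · intro h
      have := hinj k (a₁ := (f ^ k) x) (a₂ := 0) (by simpa using h)
      simpa using this
    · intro h; rw [h]; simp
  refine ⟨hker, fun hz x => ?_⟩
  have hscal : M - (1 / z) • (1 : X →L[ℂ] X) = (-(1 / z)) • f := by
    rw [hf]; ext y
    simp [smul_smul, sub_smul, smul_sub]
    rw [inv_mul_cancel₀ hz, one_smul]
    abel
  have hML1 : ML - 1 = (-1 : ℂ) • ((1 : X →L[ℂ] X) - ML) := by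
    ext y; simp
  have kerscal : ∀ (c : ℂ), c ≠ 0 → ∀ (g : X →L[ℂ] X) (k : ℕ),
      LinearMap.ker (((c • g) ^ k : X →L[ℂ] X) : X →ₗ[ℂ] X) = LinearMap.ker ((g ^ k : X →L[ℂ] X) : X →ₗ[ℂ] X) := by
    intro c hc g k
    ext y
    simp only [LinearMap.mem_ker, ContinuousLinearMap.coe_coe, smul_pow,
      ContinuousLinearMap.smul_apply, smul_eq_zero, pow_eq_zero_iff', hc,
      false_and, false_or]
  constructor
  · rintro ⟨k, hk⟩
    refine ⟨k, ?_⟩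
    rw [hML1, kerscal _ (by norm_num) _ k, hker k]
    rw [hscal, kerscal _ (by simpa using hz) f k] at hk
    exact hk
  · rintro ⟨k, hk⟩
    refine ⟨k, ?_⟩
    rw [hscal, kerscal _ (by simpa using hz) f k]
    rw [hML1, kerscal _ (by norm_num) _ k, hker k] at hk
    exact hk
end

section
/- Let (X, μ) be a measure space and Ω a finite index set. For each ω ∈ Ω let ψ_ω : X → X be measurable, let g_ω : X → [0,∞) be measurable, and let J_ω : X → (0,∞) be measurable and everywhere strictly positive. Assume the change-of-variables inequality Σ_{ω∈Ω} ∫_X (h∘ψ_ω) · J_ω dμ ≤ ∫_X h dμ holds for every measurable h : X → [0,∞]. Let 1 < t < ∞ and let t' = t/(t−1) be its conjugate exponent. Then for every measurable φ : X → [0,∞], ∫_X (Σ_{ω∈Ω} g_ω · (φ∘ψ_ω))^t dμ ≤ S^{t/t'} · ∫_X φ^t dμ, where S := ess sup_{x∈X} Σ_{ω∈Ω} g_ω(x)^{t'} · J_ω(x)^{1−t'} (the inequality being interpreted in [0,∞], and holding trivially when S = ∞). -/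
open MeasureTheory
open scoped ENNReal

namespace ENNReal

/-- Hölder's inequality for finite sums with the weight `J` moved between the two factors:
`w a = (J^{1/p} a) (w J^{-1/p})`, and `(J^{-1/p})^q = J^{1-q}` because `q / p = q - 1`. -/
theorem rpow_sum_mul_le_of_holderConjugate {ι : Type*} (s : Finset ι) (w a J : ι → ℝ≥0∞)
    (hJ0 : ∀ i ∈ s, J i ≠ 0) (hJtop : ∀ i ∈ s, J i ≠ ⊤) {p q : ℝ} (hpq : p.HolderConjugate q) :
    (∑ i ∈ s, w i * a i) ^ p ≤
      (∑ i ∈ s, w i ^ q * J i ^ (1 - q)) ^ (p / q) * ∑ i ∈ s, a i ^ p * J i := by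
  have hsplit : ∀ i ∈ s, w i * a i = (J i ^ (1 / p) * a i) * (w i * J i ^ (-(1 / p))) := by
    intro i hi
    have hcancel : J i ^ (1 / p) * J i ^ (-(1 / p)) = 1 := by
      rw [← rpow_add _ _ (hJ0 i hi) (hJtop i hi), add_neg_cancel, rpow_zero]
    calc w i * a i = (J i ^ (1 / p) * J i ^ (-(1 / p))) * (w i * a i) := by rw [hcancel, one_mul]
      _ = _ := by ring
  have hfirst : ∑ i ∈ s, (J i ^ (1 / p) * a i) ^ p = ∑ i ∈ s, a i ^ p * J i := by
    refine Finset.sum_congr rfl fun i _ => ?_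
    rw [mul_rpow_of_nonneg _ _ hpq.nonneg, ← rpow_mul, one_div_mul_cancel hpq.ne_zero, rpow_one,
      mul_comm]
  have hsecond : ∑ i ∈ s, (w i * J i ^ (-(1 / p))) ^ q = ∑ i ∈ s, w i ^ q * J i ^ (1 - q) := by
    have hexp : -(1 / p) * q = 1 - q := by
      rw [neg_mul, one_div_mul_eq_div, hpq.symm.div_conj_eq_sub_one, neg_sub]
    refine Finset.sum_congr rfl fun i _ => ?_
    rw [mul_rpow_of_nonneg _ _ hpq.symm.nonneg, ← rpow_mul, hexp]
  calc (∑ i ∈ s, w i * a i) ^ p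
      = (∑ i ∈ s, (J i ^ (1 / p) * a i) * (w i * J i ^ (-(1 / p)))) ^ p := by
        rw [Finset.sum_congr rfl hsplit]
    _ ≤ ((∑ i ∈ s, a i ^ p * J i) ^ (1 / p) * (∑ i ∈ s, w i ^ q * J i ^ (1 - q)) ^ (1 / q)) ^ p := by
        rw [← hfirst, ← hsecond]
        exact rpow_le_rpow (inner_le_Lp_mul_Lq s _ _ hpq) hpq.nonneg
    _ = _ := by
        rw [mul_rpow_of_nonneg _ _ hpq.nonneg, ← rpow_mul, ← rpow_mul,
          one_div_mul_cancel hpq.ne_zero, rpow_one, one_div_mul_eq_div, mul_comm]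

end ENNReal

theorem MeasureTheory.lintegral_mul_le_mul_lintegral_of_ae_le {α : Type*} [MeasurableSpace α]
    {μ : Measure α} {f g : α → ℝ≥0∞} {c : ℝ≥0∞} (hf : ∀ᵐ x ∂μ, f x ≤ c)
    (hg : AEMeasurable g μ) : ∫⁻ x, f x * g x ∂μ ≤ c * ∫⁻ x, g x ∂μ :=
  (lintegral_mono_ae (hf.mono fun _ hx => mul_le_mul_left hx _)).trans_eq
    (lintegral_const_mul'' c hg)

theorem stmt_19_general (X : Type*) [MeasurableSpace X] (μ : Measure X)
    (Ω : Type) [Fintype Ω]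
    (ψ : Ω → X → X) (hψ : ∀ ω, Measurable (ψ ω))
    (g : Ω → X → ℝ)
    (J : Ω → X → ℝ) (hJ : ∀ ω, Measurable (J ω)) (hJ0 : ∀ ω x, 0 < J ω x)
    (hcov : ∀ h : X → ENNReal, Measurable h →
      (∑ ω, ∫⁻ x, h (ψ ω x) * ENNReal.ofReal (J ω x) ∂μ) ≤ ∫⁻ x, h x ∂μ)
    (t t' : ℝ) (ht : 1 < t) (ht' : t' = t / (t - 1)) :
    ∀ φ : X → ENNReal, Measurable φ →
      (∫⁻ x, (∑ ω, ENNReal.ofReal (g ω x) * φ (ψ ω x)) ^ t ∂μ)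
        ≤ (essSup (fun x => ∑ ω,
              ENNReal.ofReal (g ω x) ^ t' * ENNReal.ofReal (J ω x) ^ (1 - t')) μ) ^ (t / t') *
            ∫⁻ x, (φ x) ^ t ∂μ := by
  intro φ hφ
  have hpq : t.HolderConjugate t' := (Real.holderConjugate_iff_eq_conjExponent ht).2 ht'
  set B : X → ENNReal := fun x =>
    ∑ ω, ENNReal.ofReal (g ω x) ^ t' * ENNReal.ofReal (J ω x) ^ (1 - t')
  have hterm : ∀ ω, Measurable fun x => φ (ψ ω x) ^ t * ENNReal.ofReal (J ω x) :=
    fun ω => ((hφ.comp (hψ ω)).pow_const t).mul (hJ ω).ennreal_ofReal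
  have hchange : ∫⁻ x, ∑ ω, φ (ψ ω x) ^ t * ENNReal.ofReal (J ω x) ∂μ ≤ ∫⁻ x, φ x ^ t ∂μ := by
    rw [lintegral_finsetSum _ fun ω _ => hterm ω]
    exact hcov _ (hφ.pow_const t)
  have hB : ∀ᵐ x ∂μ, B x ^ (t / t') ≤ essSup B μ ^ (t / t') := by
    filter_upwards [ENNReal.ae_le_essSup B] with x hx
    exact ENNReal.rpow_le_rpow hx (div_nonneg hpq.nonneg hpq.symm.nonneg)
  calc (∫⁻ x, (∑ ω, ENNReal.ofReal (g ω x) * φ (ψ ω x)) ^ t ∂μ)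
      ≤ ∫⁻ x, B x ^ (t / t') * ∑ ω, φ (ψ ω x) ^ t * ENNReal.ofReal (J ω x) ∂μ :=
        lintegral_mono fun x => ENNReal.rpow_sum_mul_le_of_holderConjugate _ _ _ _
          (fun ω _ => (ENNReal.ofReal_pos.2 (hJ0 ω x)).ne') (fun _ _ => ENNReal.ofReal_ne_top) hpq
    _ ≤ essSup B μ ^ (t / t') * ∫⁻ x, ∑ ω, φ (ψ ω x) ^ t * ENNReal.ofReal (J ω x) ∂μ :=
        lintegral_mul_le_mul_lintegral_of_ae_le hB
          (Finset.measurable_sum _ fun ω _ => hterm ω).aemeasurable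
    _ ≤ essSup B μ ^ (t / t') * ∫⁻ x, φ x ^ t ∂μ := mul_le_mul_right hchange _

/-- Estimate (4.8) in the proof of Lemma 16(3): under the change-of-variables
inequality `Σ_ω ∫ (h∘ψ_ω)·J_ω dμ ≤ ∫ h dμ`, Hölder's inequality yields
`∫ (Σ_ω g_ω·(φ∘ψ_ω))^t dμ ≤ S^{t/t'} ∫ φ^t dμ` with
`S = ess sup Σ_ω g_ω^{t'} J_ω^{1-t'}`. -/
theorem stmt_19 (X : Type*) [MeasurableSpace X] (μ : Measure X)
    (Ω : Type) [Fintype Ω]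
    (ψ : Ω → X → X) (hψ : ∀ ω, Measurable (ψ ω))
    (g : Ω → X → ℝ) (hg : ∀ ω, Measurable (g ω)) (hg0 : ∀ ω x, 0 ≤ g ω x)
    (J : Ω → X → ℝ) (hJ : ∀ ω, Measurable (J ω)) (hJ0 : ∀ ω x, 0 < J ω x)
    (hcov : ∀ h : X → ENNReal, Measurable h →
      (∑ ω, ∫⁻ x, h (ψ ω x) * ENNReal.ofReal (J ω x) ∂μ) ≤ ∫⁻ x, h x ∂μ)
    (t t' : ℝ) (ht : 1 < t) (ht' : t' = t / (t - 1)) :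
    ∀ φ : X → ENNReal, Measurable φ →
      (∫⁻ x, (∑ ω, ENNReal.ofReal (g ω x) * φ (ψ ω x)) ^ t ∂μ)
        ≤ (essSup (fun x => ∑ ω,
              ENNReal.ofReal (g ω x) ^ t' * ENNReal.ofReal (J ω x) ^ (1 - t')) μ) ^ (t / t') *
            ∫⁻ x, (φ x) ^ t ∂μ :=
  stmt_19_general X μ Ω ψ hψ g J hJ hJ0 hcov t t' ht ht'
end
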